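/- arXiv:1203.4008 — 8 statements merged into one kernel-verified Lean document; each statement's English description precedes it below -/
import Mathlib

section
/- For every erasure probability ε with 0 < ε < 1, every integer N ≥ 1, and all integers K, K', T with 1 ≤ K < K' ≤ T, the decoding probability is strictly decreasing in the block size: P(K',T) < P(K,T). -/
/-! `Phat ε K T` is the probability that at least `K` of `T` slots succeed, so passing from `K`
to `K + 1` loses exactly the binomial term `C(T, K) ε^(T-K) (1-ε)^K` of exactly `K` successes,
which is positive for `K ≤ T` and `0 < ε < 1`. Hence `Phat ε · T` is strictly decreasing on
`[1, T]`, and so is its `N`-th power. -/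

/-- Single-receiver decoding probability: probability that one receiver obtains
`K` successful receptions within `T` slots over a binary erasure channel with
erasure probability `ε`.  (The sum over `Finset.Icc K T` is empty, i.e. `0`,
when `T < K`.) -/
noncomputable def Phat (ε : ℝ) (K T : ℕ) : ℝ :=
  ∑ τ ∈ Finset.Icc K T, ((τ - 1).choose (K - 1) : ℝ) * ε ^ (τ - K) * (1 - ε) ^ K

/-- Probability that all `N` receivers (over i.i.d. erasure channels) decode a
network-coded block of `K` packets within `T` slots. -/
noncomputable def Pall (ε : ℝ) (N K T : ℕ) : ℝ := (Phat ε K T) ^ N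

section phat

variable {ε : ℝ}

theorem phat_succ_right (K T : ℕ) :
    Phat ε K (T + 1) = Phat ε K T + (T.choose (K - 1) : ℝ) * ε ^ (T + 1 - K) * (1 - ε) ^ K := by
  rcases le_or_gt K (T + 1) with hKT | hTK
  · rw [Phat, Finset.sum_Icc_succ_top hKT, Nat.add_sub_cancel, Phat]
  · rw [Phat, Phat, Finset.Icc_eq_empty_of_lt hTK, Finset.Icc_eq_empty_of_lt (by omega),
      Nat.choose_eq_zero_of_lt (by omega)]
    simp

theorem phat_eq_phat_succ_add {K : ℕ} (hK : 1 ≤ K) (T : ℕ) :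
    Phat ε K T = Phat ε (K + 1) T + (T.choose K : ℝ) * ε ^ (T - K) * (1 - ε) ^ K := by
  obtain ⟨k, rfl⟩ : ∃ k, K = k + 1 := ⟨K - 1, by omega⟩
  induction T with
  | zero => simp [Phat]
  | succ T ih =>
    rw [phat_succ_right, ih, phat_succ_right, Nat.choose_succ_succ']
    simp only [Nat.add_sub_cancel, Nat.add_sub_add_right]
    rcases le_or_gt (k + 1) T with hkT | hTk
    · rw [show T - k = T - (k + 1) + 1 by omega]
      push_cast
      ring
    · rw [Nat.choose_eq_zero_of_lt hTk]
      simp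

theorem phat_nonneg (hε0 : 0 ≤ ε) (hε1 : ε ≤ 1) (K T : ℕ) : 0 ≤ Phat ε K T := by
  have : 0 ≤ 1 - ε := by linarith
  unfold Phat
  positivity

theorem phat_succ_lt (hε0 : 0 < ε) (hε1 : ε < 1) {K T : ℕ} (hK : 1 ≤ K) (hKT : K ≤ T) :
    Phat ε (K + 1) T < Phat ε K T := by
  have hchoose : (0 : ℝ) < T.choose K := by exact_mod_cast Nat.choose_pos hKT
  have : 0 < 1 - ε := by linarith
  rw [phat_eq_phat_succ_add hK T, lt_add_iff_pos_right]
  positivity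

theorem strictAntiOn_phat (hε0 : 0 < ε) (hε1 : ε < 1) (T : ℕ) :
    StrictAntiOn (fun K ↦ Phat ε K T) (Set.Icc 1 T) :=
  strictAntiOn_of_succ_lt Set.ordConnected_Icc fun _ _ hK hK' ↦
    phat_succ_lt hε0 hε1 hK.1 (Nat.le_of_succ_le hK'.2)

end phat

/-- For `0 < ε < 1`, `N ≥ 1` and `1 ≤ K < K' ≤ T`, the decoding
probability is strictly decreasing in the block size: `P(K',T) < P(K,T)`. -/
theorem pall_strict_anti (ε : ℝ) (hε0 : 0 < ε) (hε1 : ε < 1) (N : ℕ) (hN : 1 ≤ N)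
    (K K' T : ℕ) (hK : 1 ≤ K) (hKK' : K < K') (hK'T : K' ≤ T) :
    Pall ε N K' T < Pall ε N K T :=
  pow_lt_pow_left₀ (strictAntiOn_phat hε0 hε1 T ⟨hK, by omega⟩ ⟨by omega, hK'T⟩ hKK')
    (phat_nonneg hε0.le hε1.le K' T) (by omega)
end

section
/- For every erasure probability ε with 0 < ε < 1 and all integers K, T with 2 ≤ K ≤ T, the inequality P̂(K−1,T) · ((T−K+1)/K) · ((1−ε)/ε) ≥ P̂(K,T) holds. -/
/-!
`P̂(K, T)` is the probability that the `K`-th success of a Bernoulli(`1 - ε`) sequence happens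
by time `T`, i.e. that `T` trials contain at least `K` successes; so it is the binomial tail
`∑_{j ≥ K} b(j)` with `b(j) = C(T, j) (1 - ε)^j ε^(T - j)`. Consecutive terms satisfy
`(j + 1) ε b(j + 1) = (T - j) (1 - ε) b(j)`, and for `j ≥ K - 1` we have `j + 1 ≥ K` and
`T - j ≤ T - K + 1`; summing over `j ≥ K - 1` gives
`K ε P̂(K, T) ≤ (T - K + 1) (1 - ε) P̂(K - 1, T)`.
-/

open Finset

theorem Finset.sum_Icc_add_one {M : Type*} [AddCommMonoid M] (f : ℕ → M) (a b : ℕ) :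
    ∑ j ∈ Icc a b, f (j + 1) = ∑ j ∈ Icc (a + 1) (b + 1), f j := by
  rw [← map_add_right_Icc, sum_map]
  rfl

section Binomial

variable {R : Type*} [CommSemiring R] (p q : R)

def binomialTerm (n j : ℕ) : R := n.choose j * p ^ j * q ^ (n - j)

def binomialTail (n k : ℕ) : R := ∑ j ∈ Icc k n, binomialTerm p q n j

theorem binomialTerm_of_lt {n j : ℕ} (h : n < j) : binomialTerm p q n j = 0 := by
  simp [binomialTerm, Nat.choose_eq_zero_of_lt h]

theorem binomialTerm_succ_succ (n j : ℕ) :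
    binomialTerm p q (n + 1) (j + 1) =
      p * binomialTerm p q n j + q * binomialTerm p q n (j + 1) := by
  rcases le_or_gt (j + 1) n with hj | hj
  · simp only [binomialTerm, Nat.choose_succ_succ', Nat.add_sub_add_right,
      show n - j = n - (j + 1) + 1 by omega]
    push_cast
    ring
  · simp only [binomialTerm, Nat.choose_succ_succ', Nat.add_sub_add_right,
      Nat.choose_eq_zero_of_lt hj]
    push_cast
    ring

theorem succ_mul_binomialTerm_succ (n j : ℕ) :
    (j + 1 : R) * q * binomialTerm p q n (j + 1) =
      ((n - j : ℕ) : R) * p * binomialTerm p q n j := by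
  rcases le_or_gt (j + 1) n with hj | hj
  · simp only [binomialTerm, show n - j = n - (j + 1) + 1 by omega, pow_succ]
    calc (j + 1 : R) * q * (n.choose (j + 1) * (p ^ j * p) * q ^ (n - (j + 1)))
        = ((n.choose (j + 1) * (j + 1) : ℕ) : R) * (p ^ j * p * q ^ (n - (j + 1)) * q) := by
          push_cast; ring
      _ = ((n.choose j * (n - j) : ℕ) : R) * (p ^ j * p * q ^ (n - (j + 1)) * q) := by
          rw [Nat.choose_succ_right_eq]
      _ = _ := by
          rw [show n - j = n - (j + 1) + 1 by omega]; push_cast; ring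
  · rw [binomialTerm_of_lt p q hj, Nat.sub_eq_zero_of_le (by omega)]
    simp

theorem sum_Icc_binomialTerm_succ (n k : ℕ) :
    ∑ j ∈ Icc k n, binomialTerm p q n (j + 1) = binomialTail p q n (k + 1) := by
  rw [Finset.sum_Icc_add_one]
  rcases le_or_gt (k + 1) (n + 1) with h | h
  · rw [sum_Icc_succ_top h, binomialTerm_of_lt p q n.lt_succ_self, add_zero, binomialTail]
  · rw [Icc_eq_empty (by omega), binomialTail, Icc_eq_empty (by omega)]

theorem binomialTail_eq_add (n k : ℕ) :
    binomialTail p q n k = binomialTerm p q n k + binomialTail p q n (k + 1) := by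
  rcases le_or_gt k n with h | h
  · rw [binomialTail, ← insert_Icc_add_one_left_eq_Icc h, sum_insert (by simp), binomialTail]
  · simp [binomialTail, binomialTerm_of_lt p q h, Icc_eq_empty_of_lt h,
      Icc_eq_empty_of_lt (h.trans k.lt_succ_self)]

theorem binomialTail_succ_succ (hpq : p + q = 1) (n k : ℕ) :
    binomialTail p q (n + 1) (k + 1) = binomialTail p q n (k + 1) + p * binomialTerm p q n k := by
  calc binomialTail p q (n + 1) (k + 1)
      = ∑ j ∈ Icc k n, binomialTerm p q (n + 1) (j + 1) := by
        rw [binomialTail, Finset.sum_Icc_add_one]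
    _ = p * binomialTail p q n k + q * binomialTail p q n (k + 1) := by
      simp only [binomialTerm_succ_succ, sum_add_distrib, ← mul_sum, sum_Icc_binomialTerm_succ,
        binomialTail]
    _ = (p + q) * binomialTail p q n (k + 1) + p * binomialTerm p q n k := by
      rw [binomialTail_eq_add p q n k]; ring
    _ = _ := by rw [hpq, one_mul]

end Binomial

section OrderedRing

variable {R : Type*} [CommRing R] [PartialOrder R] [IsOrderedRing R] {p q : R}

theorem binomialTerm_nonneg (hp : 0 ≤ p) (hq : 0 ≤ q) (n j : ℕ) :
    0 ≤ binomialTerm p q n j := by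
  unfold binomialTerm; positivity

theorem succ_mul_binomialTail_succ_le (hp : 0 ≤ p) (hq : 0 ≤ q) (n k : ℕ) :
    (k + 1 : R) * q * binomialTail p q n (k + 1) ≤ ((n : R) - k) * p * binomialTail p q n k := by
  rw [← sum_Icc_binomialTerm_succ, binomialTail, mul_sum, mul_sum]
  refine sum_le_sum fun j hj ↦ ?_
  obtain ⟨hkj, hjn⟩ := mem_Icc.mp hj
  have := binomialTerm_nonneg hp hq n j
  have := binomialTerm_nonneg hp hq n (j + 1)
  calc (k + 1 : R) * q * binomialTerm p q n (j + 1)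
      ≤ (j + 1 : R) * q * binomialTerm p q n (j + 1) := by gcongr
    _ = ((n - j : ℕ) : R) * p * binomialTerm p q n j := succ_mul_binomialTerm_succ p q n j
    _ ≤ ((n : R) - k) * p * binomialTerm p q n j := by
        push_cast [Nat.cast_sub hjn]
        gcongr

end OrderedRing

theorem Phat_succ_succ (ε : ℝ) (k T : ℕ) :
    Phat ε (k + 1) (T + 1) =
      Phat ε (k + 1) T + T.choose k * ε ^ (T - k) * (1 - ε) ^ (k + 1) := by
  rcases le_or_gt k T with h | h
  · rw [Phat, sum_Icc_succ_top (by omega), Phat]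
    simp [show T + 1 - (k + 1) = T - k by omega]
  · simp [Phat, Nat.choose_eq_zero_of_lt h, Icc_eq_empty_of_lt (Nat.succ_lt_succ h),
      Icc_eq_empty_of_lt (h.trans k.lt_succ_self)]

-- Fails for `K = 0`, where the truncation `0 - 1 = 0` makes `Phat ε 0 T = ∑_{τ ≤ T} ε ^ τ`.
theorem Phat_eq_binomialTail (ε : ℝ) (k T : ℕ) :
    Phat ε (k + 1) T = binomialTail (1 - ε) ε T (k + 1) := by
  induction T with
  | zero => simp [Phat, binomialTail]
  | succ T ih =>
    rw [Phat_succ_succ, ih, binomialTail_succ_succ _ _ (sub_add_cancel 1 ε), binomialTerm]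
    ring

theorem phat_ratio_ineq_general (ε : ℝ) (hε0 : 0 < ε) (hε1 : ε < 1) (K T : ℕ)
    (hK : 2 ≤ K) :
    Phat ε (K - 1) T * (((T : ℝ) - (K : ℝ) + 1) / (K : ℝ)) * ((1 - ε) / ε) ≥
      Phat ε K T := by
  obtain ⟨k, rfl⟩ := Nat.exists_eq_add_of_le' hK
  have hbound := succ_mul_binomialTail_succ_le (sub_nonneg.mpr hε1.le) hε0.le T (k + 1)
  rw [← Phat_eq_binomialTail, ← Phat_eq_binomialTail] at hbound
  have hlhs :
      Phat ε (k + 2 - 1) T * (((T : ℝ) - (k + 2 : ℕ) + 1) / (k + 2 : ℕ)) * ((1 - ε) / ε) =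
      ((T : ℝ) - (k + 1 : ℕ)) * (1 - ε) * Phat ε (k + 1) T / ((k + 2) * ε) := by
    push_cast
    field_simp
    ring
  rw [ge_iff_le, hlhs, le_div_iff₀ (by positivity)]
  push_cast at hbound ⊢
  linear_combination hbound

/-- For `0 < ε < 1` and `2 ≤ K ≤ T`,
`P̂(K-1,T) · ((T-K+1)/K) · ((1-ε)/ε) ≥ P̂(K,T)`. -/
theorem phat_ratio_ineq (ε : ℝ) (hε0 : 0 < ε) (hε1 : ε < 1) (K T : ℕ)
    (hK : 2 ≤ K) (hKT : K ≤ T) :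
    Phat ε (K - 1) T * (((T : ℝ) - (K : ℝ) + 1) / (K : ℝ)) * ((1 - ε) / ε) ≥
      Phat ε K T :=
  phat_ratio_ineq_general ε hε0 hε1 K T hK
end

section
/- For every erasure probability ε with 0 < ε < 1, every integer N ≥ 1, and every integer T ≥ 1, the expected immediate reward K ↦ R_T(K) is unimodal on {1, …, T}: there exists m ∈ {1, …, T} such that R_T(K) ≤ R_T(K') whenever 1 ≤ K < K' ≤ m, and R_T(K) ≥ R_T(K') whenever m ≤ K < K' ≤ T. -/
noncomputable def Rew (ε : ℝ) (N T K : ℕ) : ℝ := (K : ℝ) * Pall ε N K T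

open Finset

noncomputable def binomPmf (ε : ℝ) (T i : ℕ) : ℝ := (T.choose i : ℝ) * (1 - ε) ^ i * ε ^ (T - i)

theorem Phat_succ_right (ε : ℝ) (K T : ℕ) :
    Phat ε K (T + 1) = Phat ε K T + (T.choose (K - 1) : ℝ) * ε ^ (T + 1 - K) * (1 - ε) ^ K := by
  rcases le_or_gt K (T + 1) with hK | hK
  · rw [Phat, Phat, sum_Icc_succ_top hK, Nat.add_sub_cancel]
  · rw [Phat, Phat, Icc_eq_empty (by omega), Icc_eq_empty (by omega),
      Nat.choose_eq_zero_of_lt (by omega)]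
    simp

theorem Phat_sub_Phat_succ (ε : ℝ) {K : ℕ} (hK : 1 ≤ K) (T : ℕ) :
    Phat ε K T - Phat ε (K + 1) T = binomPmf ε T K := by
  obtain ⟨k, rfl⟩ := Nat.exists_eq_add_of_le' hK
  induction T with
  | zero => simp [Phat, binomPmf]
  | succ T ih =>
    rw [Phat_succ_right, Phat_succ_right, binomPmf, Nat.choose_succ_succ', Nat.cast_add]
    rw [binomPmf] at ih
    simp only [Nat.add_sub_cancel]
    rcases le_or_gt (k + 1) T with hkT | hkT
    · obtain ⟨d, rfl⟩ := Nat.exists_eq_add_of_le hkT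
      simp only [show k + 1 + d + 1 - (k + 1 + 1) = d by omega,
        show k + 1 + d + 1 - (k + 1) = d + 1 by omega, Nat.add_sub_cancel_left] at ih ⊢
      linear_combination ih
    · rw [Nat.choose_eq_zero_of_lt hkT] at ih ⊢
      simp only [Nat.cast_zero, zero_mul, add_zero] at ih ⊢
      linear_combination ih

theorem Phat_eq_sum_binomPmf (ε : ℝ) {K : ℕ} (hK : 1 ≤ K) (T : ℕ) :
    Phat ε K T = ∑ i ∈ Icc K T, binomPmf ε T i := by
  rcases le_or_gt K T with hKT | hKT
  · have hvanish : Phat ε (T + 1) T = 0 := by simp [Phat]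
    calc Phat ε K T = -Phat ε (T + 1) T - -Phat ε K T := by rw [hvanish]; ring
      _ = ∑ i ∈ Icc K T, (-Phat ε (i + 1) T - -Phat ε i T) :=
        (sum_Icc_sub hKT fun i => -Phat ε i T).symm
      _ = ∑ i ∈ Icc K T, binomPmf ε T i := sum_congr rfl fun i hi => by
        rw [← Phat_sub_Phat_succ ε (hK.trans (mem_Icc.1 hi).1) T]; ring
  · simp [Phat, Icc_eq_empty_of_lt hKT]

theorem Nat.choose_succ_mul_choose_le {n j i : ℕ} (hji : j ≤ i) :
    n.choose (i + 1) * n.choose j ≤ n.choose i * n.choose (j + 1) := by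
  refine Nat.le_of_mul_le_mul_right ?_ (Nat.mul_pos i.succ_pos j.succ_pos)
  calc n.choose (i + 1) * n.choose j * ((i + 1) * (j + 1))
      = n.choose (i + 1) * (i + 1) * (n.choose j * (j + 1)) := by ring
    _ = n.choose i * (n - i) * (n.choose j * (j + 1)) := by rw [Nat.choose_succ_right_eq]
    _ = n.choose i * n.choose j * ((n - i) * (j + 1)) := by ring
    _ ≤ n.choose i * n.choose j * ((n - j) * (i + 1)) :=
        Nat.mul_le_mul_left _ (Nat.mul_le_mul (Nat.sub_le_sub_left hji n) (by omega))
    _ = n.choose i * (n.choose j * (n - j)) * (i + 1) := by ring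
    _ = n.choose i * n.choose (j + 1) * ((i + 1) * (j + 1)) := by
      rw [← Nat.choose_succ_right_eq]; ring

theorem binomPmf_nonneg {ε : ℝ} (hε0 : 0 ≤ ε) (hε1 : ε ≤ 1) (T i : ℕ) : 0 ≤ binomPmf ε T i := by
  have : 0 ≤ 1 - ε := by linarith
  unfold binomPmf; positivity

theorem binomPmf_succ_mul_le {ε : ℝ} (hε0 : 0 ≤ ε) (hε1 : ε ≤ 1) (T : ℕ) {j i : ℕ}
    (hji : j ≤ i) :
    binomPmf ε T (i + 1) * binomPmf ε T j ≤ binomPmf ε T i * binomPmf ε T (j + 1) := by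
  rcases le_or_gt T i with hTi | hiT
  · rw [binomPmf, Nat.choose_eq_zero_of_lt (by omega)]
    simpa using mul_nonneg (binomPmf_nonneg hε0 hε1 T i) (binomPmf_nonneg hε0 hε1 T (j + 1))
  · have hexp : T - i + (T - (j + 1)) = T - (i + 1) + (T - j) := by omega
    have : 0 ≤ 1 - ε := by linarith
    calc binomPmf ε T (i + 1) * binomPmf ε T j
        = ((T.choose (i + 1) * T.choose j : ℕ) : ℝ)
            * ((1 - ε) ^ (i + 1 + j) * ε ^ (T - (i + 1) + (T - j))) := by
          unfold binomPmf; push_cast; ring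
      _ ≤ ((T.choose i * T.choose (j + 1) : ℕ) : ℝ)
            * ((1 - ε) ^ (i + 1 + j) * ε ^ (T - (i + 1) + (T - j))) :=
          mul_le_mul_of_nonneg_right (mod_cast Nat.choose_succ_mul_choose_le hji) (by positivity)
      _ = binomPmf ε T i * binomPmf ε T (j + 1) := by
          rw [← hexp]; unfold binomPmf; push_cast; ring

theorem sum_Icc_mul_sum_Icc_add_two_le_sq {f : ℕ → ℝ} (hf : ∀ i, 0 ≤ f i)
    (hcross : ∀ j i, j ≤ i → f (i + 1) * f j ≤ f i * f (j + 1)) (K T : ℕ) :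
    (∑ i ∈ Icc K T, f i) * ∑ i ∈ Icc (K + 2) T, f i ≤ (∑ i ∈ Icc (K + 1) T, f i) ^ 2 := by
  rcases lt_or_ge T (K + 1) with hTK | hKT
  · rw [Icc_eq_empty (by omega : ¬K + 2 ≤ T), sum_empty, mul_zero]
    positivity
  set S := ∑ i ∈ Icc (K + 1) T, f i
  have hS₀ : ∑ i ∈ Icc K T, f i = f K + S := by
    rw [← add_sum_Ioc_eq_sum_Icc (by omega), ← Icc_add_one_left_eq_Ioc]
  have hS₂ : ∑ i ∈ Icc (K + 2) T, f i = S - f (K + 1) := by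
    rw [eq_sub_iff_add_eq', show K + 2 = K + 1 + 1 by rfl, Icc_add_one_left_eq_Ioc,
      add_sum_Ioc_eq_sum_Icc hKT]
  -- termwise this is `hcross K i`, and the right-hand side telescopes
  have key : S * (f K - f (K + 1)) ≤ f K * (f (K + 1) - f (T + 1)) :=
    calc S * (f K - f (K + 1)) = ∑ i ∈ Icc (K + 1) T, f i * (f K - f (K + 1)) := sum_mul ..
      _ ≤ ∑ i ∈ Icc (K + 1) T, f K * -(f (i + 1) - f i) := sum_le_sum fun i hi => by
        nlinarith [hcross K i (by linarith [(mem_Icc.1 hi).1])]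
      _ = f K * (f (K + 1) - f (T + 1)) := by
        rw [← mul_sum, sum_neg_distrib, sum_Icc_sub hKT]; ring
  rw [hS₀, hS₂]
  nlinarith [mul_nonneg (hf K) (hf (T + 1))]

theorem Phat_mul_Phat_add_two_le_sq {ε : ℝ} (hε0 : 0 ≤ ε) (hε1 : ε ≤ 1) {K : ℕ} (hK : 1 ≤ K)
    (T : ℕ) : Phat ε K T * Phat ε (K + 2) T ≤ Phat ε (K + 1) T ^ 2 := by
  rw [Phat_eq_sum_binomPmf ε hK, Phat_eq_sum_binomPmf ε (by omega : 1 ≤ K + 1),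
    Phat_eq_sum_binomPmf ε (by omega : 1 ≤ K + 2)]
  exact sum_Icc_mul_sum_Icc_add_two_le_sq (binomPmf_nonneg hε0 hε1 T)
    (fun _ _ => binomPmf_succ_mul_le hε0 hε1 T) K T

theorem Phat_nonneg {ε : ℝ} (hε0 : 0 ≤ ε) (hε1 : ε ≤ 1) (K T : ℕ) : 0 ≤ Phat ε K T := by
  have : 0 ≤ 1 - ε := by linarith
  exact sum_nonneg fun _ _ => by positivity

theorem Phat_pos {ε : ℝ} (hε0 : 0 ≤ ε) (hε1 : ε < 1) {K T : ℕ} (hKT : K ≤ T) :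
    0 < Phat ε K T := by
  have : 0 < 1 - ε := by linarith
  refine lt_of_lt_of_le ?_ (single_le_sum (fun _ _ => by positivity) (left_mem_Icc.2 hKT))
  simp [pow_pos this]

theorem Rew_pos {ε : ℝ} (hε0 : 0 ≤ ε) (hε1 : ε < 1) (N : ℕ) {T K : ℕ} (hK : 1 ≤ K)
    (hKT : K ≤ T) : 0 < Rew ε N T K := by
  have := Phat_pos hε0 hε1 hKT
  unfold Rew Pall
  have : (0 : ℝ) < K := by exact_mod_cast hK
  positivity

theorem Rew_mul_Rew_add_two_le_sq {ε : ℝ} (hε0 : 0 ≤ ε) (hε1 : ε ≤ 1) (N T : ℕ) {K : ℕ}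
    (hK : 1 ≤ K) : Rew ε N T K * Rew ε N T (K + 2) ≤ Rew ε N T (K + 1) ^ 2 := by
  have := Phat_nonneg hε0 hε1 K T
  have := Phat_nonneg hε0 hε1 (K + 2) T
  calc Rew ε N T K * Rew ε N T (K + 2)
      = ((K : ℝ) * (K + 2)) * (Phat ε K T * Phat ε (K + 2) T) ^ N := by
        simp only [Rew, Pall]; push_cast; ring
    _ ≤ ((K : ℝ) + 1) ^ 2 * (Phat ε (K + 1) T ^ 2) ^ N := by
        gcongr
        · nlinarith
        · exact Phat_mul_Phat_add_two_le_sq hε0 hε1 hK T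
    _ = Rew ε N T (K + 1) ^ 2 := by simp only [Rew, Pall]; push_cast; ring

theorem le_of_mul_le_sq_of_le {α : Type*} [Field α] [LinearOrder α] [IsStrictOrderedRing α]
    {a b c : α} (ha : 0 < a) (hb : 0 ≤ b) (habc : a * c ≤ b ^ 2) (hba : b ≤ a) : c ≤ b := by
  nlinarith

theorem exists_unimodal_of_descent_persists {β : Type*} [LinearOrder β] {f : ℕ → β} {a b : ℕ}
    (hab : a ≤ b) (hf : ∀ k, a ≤ k → k + 2 ≤ b → f (k + 1) ≤ f k → f (k + 2) ≤ f (k + 1)) :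
    ∃ m ∈ Set.Icc a b, MonotoneOn f (Set.Icc a m) ∧ AntitoneOn f (Set.Icc m b) := by
  classical
  have hex : ∃ k, a ≤ k ∧ (b ≤ k ∨ f (k + 1) ≤ f k) := ⟨b, hab, .inl le_rfl⟩
  set m := Nat.find hex
  obtain ⟨ham, hm⟩ : a ≤ m ∧ (b ≤ m ∨ f (m + 1) ≤ f m) := Nat.find_spec hex
  refine ⟨m, ⟨ham, Nat.find_min' hex ⟨hab, .inl le_rfl⟩⟩, ?_, ?_⟩
  · refine monotoneOn_of_le_succ Set.ordConnected_Icc fun k _ hk hk₁ => ?_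
    rw [Order.succ_eq_add_one] at hk₁ ⊢
    have : ¬(a ≤ k ∧ (b ≤ k ∨ f (k + 1) ≤ f k)) := Nat.find_min hex hk₁.2
    push Not at this
    exact (this hk.1).2.le
  · have hdesc : ∀ k, m ≤ k → k + 1 ≤ b → f (k + 1) ≤ f k := by
      intro k hmk
      induction k, hmk using Nat.le_induction with
      | base => exact fun hmb => hm.resolve_left (by omega)
      | succ k hmk ih => exact fun hkb => hf k (by omega) hkb (ih (by omega))
    refine antitoneOn_of_succ_le Set.ordConnected_Icc fun k _ hk hk₁ => ?_
    rw [Order.succ_eq_add_one] at hk₁ ⊢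
    exact hdesc k hk.1 hk₁.2

theorem reward_unimodal_general (ε : ℝ) (hε0 : 0 < ε) (hε1 : ε < 1) (N : ℕ)
    (T : ℕ) (hT : 1 ≤ T) :
    ∃ m, 1 ≤ m ∧ m ≤ T ∧
      (∀ K K', 1 ≤ K → K < K' → K' ≤ m → Rew ε N T K ≤ Rew ε N T K') ∧
      (∀ K K', m ≤ K → K < K' → K' ≤ T → Rew ε N T K' ≤ Rew ε N T K) := by
  have hpersist : ∀ k, 1 ≤ k → k + 2 ≤ T →
      Rew ε N T (k + 1) ≤ Rew ε N T k → Rew ε N T (k + 2) ≤ Rew ε N T (k + 1) :=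
    fun k hk hkT => le_of_mul_le_sq_of_le (Rew_pos hε0.le hε1 N hk (by omega))
      (Rew_pos hε0.le hε1 N (by omega) (by omega)).le
      (Rew_mul_Rew_add_two_le_sq hε0.le hε1.le N T hk)
  obtain ⟨m, ⟨hm1, hmT⟩, hmono, hanti⟩ := exists_unimodal_of_descent_persists hT hpersist
  exact ⟨m, hm1, hmT,
    fun K K' hK hKK' hK'm => hmono ⟨hK, by omega⟩ ⟨by omega, hK'm⟩ hKK'.le,
    fun K K' hmK hKK' hK'T => hanti ⟨hmK, by omega⟩ ⟨by omega, hK'T⟩ hKK'.le⟩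

/-- For `0 < ε < 1`, `N ≥ 1` and `T ≥ 1`, the map `K ↦ R_T(K)` is
unimodal on `{1,…,T}`: there is `m ∈ {1,…,T}` such that `R_T` is monotonically
nondecreasing up to `m` and monotonically nonincreasing from `m` on. -/
theorem reward_unimodal (ε : ℝ) (hε0 : 0 < ε) (hε1 : ε < 1) (N : ℕ) (hN : 1 ≤ N)
    (T : ℕ) (hT : 1 ≤ T) :
    ∃ m, 1 ≤ m ∧ m ≤ T ∧
      (∀ K K', 1 ≤ K → K < K' → K' ≤ m → Rew ε N T K ≤ Rew ε N T K') ∧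
      (∀ K K', m ≤ K → K < K' → K' ≤ T → Rew ε N T K' ≤ Rew ε N T K) :=
  reward_unimodal_general ε hε0 hε1 N T hT
end

section
/- Fix integers t ≥ 2 and N ≥ 1, and define f(ε, t, N) = (1 − ε^t) − 2^{1/N} (1 − ε^t + t ε^t − t ε^{t−1}) for ε ∈ (0,1). Then there exists a unique ε*(t,N) ∈ (0,1) such that f(ε*(t,N), t, N) = 0; moreover f(ε, t, N) < 0 for all ε ∈ (0, ε*(t,N)) and f(ε, t, N) > 0 for all ε ∈ (ε*(t,N), 1). Equivalently, regarding R_t(1) = (1 − ε^t)^N and R_t(2) = 2 (1 − ε^t + t ε^t − t ε^{t−1})^N as functions of ε, one has R_t(1) < R_t(2) for ε below the threshold ε*(t,N) and R_t(1) > R_t(2) for ε above it. -/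
/-!
Dividing by the positive weight `(1 - ε) ε^(t-1)`, `f(ε, t, N)` has the sign of
`c t - (c - 1) ∑_{j<t} ε^(-j)` with `c = 2^(1/N) > 1`. Since `t ≥ 2` this is strictly
increasing in `ε`, negative for small `ε` and equal to `t` at `ε = 1`, so it has a single
zero `ε*` in `(0, 1)` where `f` changes sign. Comparing `R_t(1)` with `R_t(2)` amounts to
comparing the nonnegative quantities `1 - ε^t` and `c (1 - ε^t + t ε^t - t ε^(t-1))` after
raising them to the `N`-th power.
-/

/-- The threshold function `f(ε, t, N) = (1 - ε^t) - 2^{1/N} (1 - ε^t + t ε^t - t ε^{t-1})`,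
where `2^{1/N}` is the real `N`-th root of `2`. -/
noncomputable def fThresh (ε : ℝ) (t N : ℕ) : ℝ :=
  (1 - ε ^ t) - (2 : ℝ) ^ (1 / (N : ℝ)) * (1 - ε ^ t + (t : ℝ) * ε ^ t - (t : ℝ) * ε ^ (t - 1))

open Finset

lemma pow_pred_mul_geom_sum_inv {K : Type*} [Field K] {x : K} (hx : x ≠ 0) (n : ℕ) :
    x ^ (n - 1) * ∑ j ∈ range n, x⁻¹ ^ j = ∑ i ∈ range n, x ^ i := by
  rw [mul_sum, ← sum_range_reflect (x ^ ·)]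
  refine sum_congr rfl fun j hj => ?_
  rw [inv_pow, ← pow_sub₀ x hx (by simp at hj; omega)]

lemma one_sub_pow_eq_mul_geom_sum_inv {K : Type*} [Field K] {x : K} (hx : x ≠ 0) (n : ℕ) :
    1 - x ^ n = (1 - x) * x ^ (n - 1) * ∑ j ∈ range n, x⁻¹ ^ j := by
  rw [mul_assoc, pow_pred_mul_geom_sum_inv hx, mul_neg_geom_sum]

lemma one_sub_pow_add_mul_pow_sub_mul_pow_pred_eq {K : Type*} [Field K] {x : K} (hx : x ≠ 0)
    {n : ℕ} (hn : 1 ≤ n) :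
    1 - x ^ n + n * x ^ n - n * x ^ (n - 1) =
      (1 - x) * x ^ (n - 1) * (∑ j ∈ range n, x⁻¹ ^ j - n) := by
  have hpow : x ^ n = x * x ^ (n - 1) := by rw [← pow_succ', Nat.sub_add_cancel hn]
  rw [mul_sub, ← one_sub_pow_eq_mul_geom_sum_inv hx, hpow]
  ring

lemma one_sub_pow_add_mul_pow_sub_mul_pow_pred_nonneg {x : ℝ} (hx : x ∈ Set.Ioo 0 1) {n : ℕ}
    (hn : 1 ≤ n) : 0 ≤ 1 - x ^ n + n * x ^ n - n * x ^ (n - 1) := by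
  rw [one_sub_pow_add_mul_pow_sub_mul_pow_pred_eq hx.1.ne' hn]
  have hsum : (n : ℝ) ≤ ∑ j ∈ range n, x⁻¹ ^ j := by
    simpa using sum_le_sum (s := range n) fun j _ =>
      one_le_pow₀ (one_le_inv₀ hx.1 |>.2 hx.2.le) (n := j)
  exact mul_nonneg (mul_nonneg (sub_nonneg.2 hx.2.le) (pow_nonneg hx.1.le _)) (sub_nonneg.2 hsum)

lemma strictMonoOn_geom_sum {n : ℕ} (hn : 2 ≤ n) :
    StrictMonoOn (fun x : ℝ => ∑ i ∈ range n, x ^ i) (Set.Ici 0) := by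
  intro x hx y _ hxy
  exact sum_lt_sum (fun i _ => pow_le_pow_left₀ hx hxy.le i) ⟨1, by simp; omega, by simpa⟩

noncomputable def thresholdFactor (c : ℝ) (t : ℕ) (ε : ℝ) : ℝ :=
  c * t - (c - 1) * ∑ j ∈ range t, ε⁻¹ ^ j

lemma fThresh_eq_mul_thresholdFactor {ε : ℝ} (hε : ε ≠ 0) {t : ℕ} (ht : 1 ≤ t)
    (N : ℕ) :
    fThresh ε t N = (1 - ε) * ε ^ (t - 1) * thresholdFactor (2 ^ (1 / (N : ℝ))) t ε := by
  rw [fThresh, thresholdFactor, one_sub_pow_add_mul_pow_sub_mul_pow_pred_eq hε ht,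
    one_sub_pow_eq_mul_geom_sum_inv hε]
  ring

section thresholdFactor

variable {c : ℝ} (hc : 1 < c) {t : ℕ} (ht : 2 ≤ t)
include hc ht

lemma strictMonoOn_thresholdFactor : StrictMonoOn (thresholdFactor c t) (Set.Ioi 0) := by
  intro x hx y hy hxy
  have := strictMonoOn_geom_sum ht (Set.mem_Ici.2 (inv_pos.2 hy).le)
    (Set.mem_Ici.2 (inv_pos.2 hx).le) ((inv_lt_inv₀ hy hx).2 hxy)
  simp only [thresholdFactor] at this ⊢
  nlinarith

lemma exists_thresholdFactor_eq_zero :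
    ∃ e ∈ Set.Ioo (0 : ℝ) 1, thresholdFactor c t e = 0 := by
  have ht' : (2 : ℝ) ≤ t := by exact_mod_cast ht
  set x₀ := (c - 1) / (c * t)
  have hx₀ : 0 < x₀ := div_pos (sub_pos.2 hc) (by positivity)
  have hx₀1 : x₀ < 1 := (div_lt_one (by positivity)).2 (by nlinarith)
  -- already the first two terms `1 + x₀⁻¹` of the geometric sum exceed `c t / (c - 1)`
  have hneg : thresholdFactor c t x₀ < 0 := by
    have hsum : ∑ j ∈ range 2, x₀⁻¹ ^ j ≤ ∑ j ∈ range t, x₀⁻¹ ^ j :=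
      sum_le_sum_of_subset_of_nonneg (range_subset_range.2 ht) fun j _ _ => by positivity
    have hx₀inv : (c - 1) * x₀⁻¹ = c * t := by
      rw [inv_div, mul_div_cancel₀ _ (sub_pos.2 hc).ne']
    simp only [sum_range_succ, sum_range_zero, pow_zero, pow_one, zero_add] at hsum
    simp only [thresholdFactor]
    nlinarith [mul_le_mul_of_nonneg_left hsum (sub_pos.2 hc).le]
  have hpos : 0 < thresholdFactor c t 1 := by simp [thresholdFactor]; nlinarith
  have hcont : ContinuousOn (thresholdFactor c t) (Set.Icc x₀ 1) := by
    refine continuousOn_const.sub (continuousOn_const.mul (continuousOn_finsetSum _ fun j _ => ?_))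
    exact (continuousOn_id.inv₀ fun x hx => (hx₀.trans_le hx.1).ne').pow j
  obtain ⟨e, he, hfe⟩ := intermediate_value_Ioo hx₀1.le hcont ⟨hneg, hpos⟩
  exact ⟨e, ⟨hx₀.trans he.1, he.2⟩, hfe⟩

end thresholdFactor

lemma one_lt_two_rpow_one_div {N : ℕ} (hN : N ≠ 0) : 1 < (2 : ℝ) ^ (1 / (N : ℝ)) :=
  Real.one_lt_rpow one_lt_two (by positivity)

section sign

variable {t N : ℕ} (ht : 2 ≤ t) (hN : N ≠ 0) {e ε : ℝ} (he : e ∈ Set.Ioo 0 1)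
  (hfe : thresholdFactor (2 ^ (1 / (N : ℝ))) t e = 0) (hε : ε ∈ Set.Ioo 0 1)
include ht hN he hfe hε

lemma fThresh_neg_iff : fThresh ε t N < 0 ↔ ε < e := by
  have hw : 0 < (1 - ε) * ε ^ (t - 1) := mul_pos (sub_pos.2 hε.2) (pow_pos hε.1 _)
  have hmono := strictMonoOn_thresholdFactor (one_lt_two_rpow_one_div hN) ht
  rw [fThresh_eq_mul_thresholdFactor hε.1.ne' (by omega), ← mul_zero ((1 - ε) * _),
    mul_lt_mul_iff_right₀ hw, ← hfe, hmono.lt_iff_lt hε.1 he.1]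

lemma fThresh_pos_iff : 0 < fThresh ε t N ↔ e < ε := by
  have hw : 0 < (1 - ε) * ε ^ (t - 1) := mul_pos (sub_pos.2 hε.2) (pow_pos hε.1 _)
  have hmono := strictMonoOn_thresholdFactor (one_lt_two_rpow_one_div hN) ht
  rw [fThresh_eq_mul_thresholdFactor hε.1.ne' (by omega), ← mul_zero ((1 - ε) * _),
    mul_lt_mul_iff_right₀ hw, ← hfe, hmono.lt_iff_lt he.1 hε.1]

end sign

lemma rpow_one_div_natCast_pow {x : ℝ} (hx : 0 ≤ x) {N : ℕ} (hN : N ≠ 0) :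
    (x ^ (1 / (N : ℝ))) ^ N = x := by
  rw [one_div, Real.rpow_inv_natCast_pow hx hN]

lemma pow_lt_two_mul_pow_of_lt_rpow_mul {x y : ℝ} {N : ℕ} (hN : N ≠ 0) (hx : 0 ≤ x)
    (h : x < (2 : ℝ) ^ (1 / (N : ℝ)) * y) : x ^ N < 2 * y ^ N := by
  have := pow_lt_pow_left₀ h hx hN
  rwa [mul_pow, rpow_one_div_natCast_pow zero_le_two hN] at this

lemma two_mul_pow_lt_pow_of_rpow_mul_lt {x y : ℝ} {N : ℕ} (hN : N ≠ 0) (hy : 0 ≤ y)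
    (h : (2 : ℝ) ^ (1 / (N : ℝ)) * y < x) : 2 * y ^ N < x ^ N := by
  have := pow_lt_pow_left₀ h (by positivity) hN
  rwa [mul_pow, rpow_one_div_natCast_pow zero_le_two hN] at this

/-- Fix `t ≥ 2` and `N ≥ 1`. There is a unique `ε*(t,N) ∈ (0,1)` with
`f(ε*(t,N), t, N) = 0`; moreover `f(·,t,N) < 0` on `(0, ε*(t,N))` and `> 0` on
`(ε*(t,N), 1)`. Equivalently, `R_t(1) = (1-ε^t)^N < 2(1-ε^t+tε^t-tε^{t-1})^N = R_t(2)`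
below the threshold and `R_t(1) > R_t(2)` above it. -/
theorem threshold_exists (t N : ℕ) (ht : 2 ≤ t) (hN : 1 ≤ N) :
    ∃ e : ℝ, e ∈ Set.Ioo (0 : ℝ) 1 ∧ fThresh e t N = 0 ∧
      (∀ ε' ∈ Set.Ioo (0 : ℝ) 1, fThresh ε' t N = 0 → ε' = e) ∧
      (∀ ε' ∈ Set.Ioo (0 : ℝ) e, fThresh ε' t N < 0) ∧
      (∀ ε' ∈ Set.Ioo e (1 : ℝ), 0 < fThresh ε' t N) ∧
      (∀ ε' ∈ Set.Ioo (0 : ℝ) e,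
        (1 - ε' ^ t) ^ N <
          2 * (1 - ε' ^ t + (t : ℝ) * ε' ^ t - (t : ℝ) * ε' ^ (t - 1)) ^ N) ∧
      (∀ ε' ∈ Set.Ioo e (1 : ℝ),
        2 * (1 - ε' ^ t + (t : ℝ) * ε' ^ t - (t : ℝ) * ε' ^ (t - 1)) ^ N <
          (1 - ε' ^ t) ^ N) := by
  replace hN : N ≠ 0 := by omega
  obtain ⟨e, he, hfe⟩ := exists_thresholdFactor_eq_zero (one_lt_two_rpow_one_div hN) ht
  have hbelow : ∀ ε ∈ Set.Ioo (0 : ℝ) e, fThresh ε t N < 0 := fun ε hε =>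
    (fThresh_neg_iff ht hN he hfe ⟨hε.1, hε.2.trans he.2⟩).2 hε.2
  have habove : ∀ ε ∈ Set.Ioo e 1, 0 < fThresh ε t N := fun ε hε =>
    (fThresh_pos_iff ht hN he hfe ⟨he.1.trans hε.1, hε.2⟩).2 hε.1
  refine ⟨e, he, ?_, fun ε hε h0 => ?_, hbelow, habove, fun ε hε => ?_, fun ε hε => ?_⟩
  · rw [fThresh_eq_mul_thresholdFactor he.1.ne' (by omega), hfe, mul_zero]
  · exact le_antisymm (not_lt.1 fun h => ((fThresh_pos_iff ht hN he hfe hε).2 h).ne' h0)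
      (not_lt.1 fun h => ((fThresh_neg_iff ht hN he hfe hε).2 h).ne h0)
  · refine pow_lt_two_mul_pow_of_lt_rpow_mul hN ?_ (sub_neg.1 (hbelow ε hε))
    exact sub_nonneg.2 (pow_le_one₀ hε.1.le (hε.2.trans he.2).le)
  · exact two_mul_pow_lt_pow_of_rpow_mul_lt hN
      (one_sub_pow_add_mul_pow_sub_mul_pow_pred_nonneg ⟨he.1.trans hε.1, hε.2⟩ (by omega))
      (sub_pos.1 (habove ε hε))
end

section
/- Let ε ∈ (0,1), N ≥ 1, and let t ≥ 2 be an integer. If R_t(1) > R_t(2), then the optimal policy is plain retransmission for all remaining slots: K*_j = 1 for every j ∈ {1, …, t}. -/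
/-- Right-hand side of the Bellman recursion for the block-size-adaptation MDP:
`R_t(K) + ∑_{j=0}^{t-K} (P(K, t-j) - P(K, t-j-1)) · V(j)`. -/
noncomputable def bellmanRHS (ε : ℝ) (N : ℕ) (V : ℕ → ℝ) (t K : ℕ) : ℝ :=
  Rew ε N t K +
    ∑ j ∈ Finset.range (t - K + 1), (Pall ε N K (t - j) - Pall ε N K (t - j - 1)) * V j

/-- `V` is the optimal value function of the finite-horizon MDP (Bellman recursion with
`V 0 = 0`, and `V t` the maximum of `bellmanRHS` over `K ∈ {1,…,t}`), and `Ks t` is the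
least block size in `{1,…,t}` attaining that maximum. -/
def BellmanSystem (ε : ℝ) (N : ℕ) (V : ℕ → ℝ) (Ks : ℕ → ℕ) : Prop :=
  V 0 = 0 ∧
  (∀ t, 1 ≤ t → ∀ K ∈ Finset.Icc 1 t, bellmanRHS ε N V t K ≤ V t) ∧
  (∀ t, 1 ≤ t → Ks t ∈ Finset.Icc 1 t ∧ V t = bellmanRHS ε N V t (Ks t) ∧
    ∀ K ∈ Finset.Icc 1 t, V t = bellmanRHS ε N V t K → Ks t ≤ K)

open Finset

lemma sum_range_sub_mul_eq (P V : ℕ → ℝ) (hV : V 0 = 0) (t : ℕ) :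
    ∑ j ∈ range t, (P (t - j) - P (t - j - 1)) * V j =
      ∑ i ∈ range t, (V (i + 1) - V i) * (P (t - 1 - i) - P 0) := by
  induction t generalizing P with
  | zero => simp
  | succ t ih =>
    have hshift : ∑ j ∈ range t, (P (t + 1 - j) - P (t + 1 - j - 1)) * V j =
        ∑ j ∈ range t, (P (t - j + 1) - P (t - j - 1 + 1)) * V j :=
      sum_congr rfl fun j hj => by
        rw [mem_range] at hj
        rw [show t + 1 - j = t - j + 1 by omega, show t - j + 1 - 1 = t - j - 1 + 1 by omega]
    have hVt : V t = ∑ i ∈ range t, (V (i + 1) - V i) := by rw [sum_range_sub, hV, sub_zero]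
    rw [sum_range_succ, hshift, ih (fun m => P (m + 1)), sum_range_succ]
    simp only [Nat.add_sub_cancel, Nat.add_sub_cancel_left, Nat.sub_self, zero_add, sub_self,
      mul_zero, add_zero]
    rw [hVt, mul_sum, ← sum_add_distrib]
    refine sum_congr rfl fun i hi => ?_
    rw [mem_range] at hi
    rw [show t - 1 - i + 1 = t - i by omega]
    ring

lemma add_two_mul_le_of_mul_pow_le {x y z : ℝ} (n : ℕ) (hy : 0 ≤ y) (hz : 0 ≤ z)
    (hzx : z ≤ x) (hyx : 2 * y ≤ x) (h : z * x ^ n ≤ y ^ (n + 1)) : (n + 2) * z ≤ x := by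
  rcases (show 0 ≤ x by linarith).eq_or_lt with rfl | hx
  · nlinarith
  have hn : ((n + 2 : ℕ) : ℝ) ≤ 2 ^ (n + 1) := by
    exact_mod_cast Nat.lt_two_pow_self (n := n + 1)
  push_cast at hn
  refine le_of_mul_le_mul_right ?_ (pow_pos hx n)
  calc (n + 2) * z * x ^ n = (n + 2) * (z * x ^ n) := by ring
    _ ≤ 2 ^ (n + 1) * y ^ (n + 1) := by gcongr
    _ = (2 * y) ^ (n + 1) := by ring
    _ ≤ x ^ (n + 1) := by gcongr
    _ = x * x ^ n := by ring

/-- Probability of at least `K` successes in `T` trials, by conditioning on the first trial.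
It agrees with `Phat ε K T` for `K ≥ 1`, but `Phat ε 0 T` is not `1`. -/
noncomputable def tailProb (ε : ℝ) : ℕ → ℕ → ℝ
  | 0, _ => 1
  | _ + 1, 0 => 0
  | K + 1, T + 1 => ε * tailProb ε (K + 1) T + (1 - ε) * tailProb ε K T

@[simp] lemma tailProb_zero_left (ε : ℝ) (T : ℕ) : tailProb ε 0 T = 1 := by
  cases T <;> rfl

@[simp] lemma tailProb_succ_zero (ε : ℝ) (K : ℕ) : tailProb ε (K + 1) 0 = 0 := rfl

lemma tailProb_succ_succ (ε : ℝ) (K T : ℕ) :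
    tailProb ε (K + 1) (T + 1) = ε * tailProb ε (K + 1) T + (1 - ε) * tailProb ε K T := rfl

lemma tailProb_one_succ (ε : ℝ) (T : ℕ) :
    tailProb ε 1 (T + 1) = ε * tailProb ε 1 T + (1 - ε) := by
  rw [tailProb_succ_succ, tailProb_zero_left, mul_one]

lemma Phat_succ_eq_sum_range (ε : ℝ) (m T : ℕ) :
    Phat ε (m + 1) T =
      ∑ i ∈ range (T - m), ((m + i).choose m : ℝ) * ε ^ i * (1 - ε) ^ (m + 1) := by
  rw [Phat, ← Ico_add_one_right_eq_Icc, sum_Ico_eq_sum_range, Nat.add_sub_add_right]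
  refine sum_congr rfl fun i _ => ?_
  rw [show m + 1 + i - 1 = m + i by omega, Nat.add_sub_cancel_left, Nat.add_sub_cancel]

lemma sum_range_choose_pascal (ε : ℝ) (m n : ℕ) :
    ∑ i ∈ range (n + 1), ((m + 1 + i).choose (m + 1) : ℝ) * ε ^ i * (1 - ε) ^ (m + 2) =
      ε * ∑ i ∈ range n, ((m + 1 + i).choose (m + 1) : ℝ) * ε ^ i * (1 - ε) ^ (m + 2) +
        (1 - ε) * ∑ i ∈ range (n + 1), ((m + i).choose m : ℝ) * ε ^ i * (1 - ε) ^ (m + 1) := by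
  induction n with
  | zero =>
    simp only [zero_add, add_zero, sum_range_one, sum_range_zero, Nat.choose_self, Nat.cast_one,
      pow_zero]
    ring
  | succ n ih =>
    have pascal : ((m + 1 + (n + 1)).choose (m + 1) : ℝ) * ε ^ (n + 1) * (1 - ε) ^ (m + 2) =
        ε * (((m + 1 + n).choose (m + 1) : ℝ) * ε ^ n * (1 - ε) ^ (m + 2)) +
          (1 - ε) * (((m + (n + 1)).choose m : ℝ) * ε ^ (n + 1) * (1 - ε) ^ (m + 1)) := by
      rw [show m + 1 + (n + 1) = m + 1 + n + 1 by ring, Nat.choose_succ_succ',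
        show m + 1 + n = m + (n + 1) by ring]
      push_cast
      ring
    rw [sum_range_succ, sum_range_succ _ (n + 1)]
    linear_combination ih + pascal - ε * sum_range_succ
      (fun i => ((m + 1 + i).choose (m + 1) : ℝ) * ε ^ i * (1 - ε) ^ (m + 2)) n

lemma Phat_one_succ (ε : ℝ) (T : ℕ) : Phat ε 1 (T + 1) = ε * Phat ε 1 T + (1 - ε) := by
  simp only [Phat_succ_eq_sum_range, Nat.sub_zero, zero_add, Nat.choose_zero_right]
  rw [sum_range_succ', mul_sum, Nat.cast_one, pow_zero, one_mul, one_mul, pow_one]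
  congr 1
  exact sum_congr rfl fun i _ => by ring

lemma Phat_add_two_succ (ε : ℝ) (K T : ℕ) :
    Phat ε (K + 2) (T + 1) = ε * Phat ε (K + 2) T + (1 - ε) * Phat ε (K + 1) T := by
  simp only [Phat_succ_eq_sum_range, Nat.add_sub_add_right]
  cases hn : T - K with
  | zero => rw [show T - (K + 1) = 0 by omega]; simp
  | succ n =>
    rw [show T - (K + 1) = n by omega]
    exact sum_range_choose_pascal ε K n

lemma Phat_eq_tailProb (ε : ℝ) (K T : ℕ) : Phat ε (K + 1) T = tailProb ε (K + 1) T := by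
  induction T generalizing K with
  | zero => simp [Phat]
  | succ T ih =>
    cases K with
    | zero => rw [Phat_one_succ, ih, tailProb_succ_succ, tailProb_zero_left, mul_one]
    | succ K => rw [Phat_add_two_succ, ih, ih, tailProb_succ_succ]

lemma Pall_succ (ε : ℝ) (N K T : ℕ) : Pall ε N (K + 1) T = tailProb ε (K + 1) T ^ N := by
  rw [Pall, Phat_eq_tailProb]

section tailProb

variable {ε : ℝ}

lemma tailProb_of_lt {K T : ℕ} (h : T < K) : tailProb ε K T = 0 := by
  induction T generalizing K with
  | zero => obtain ⟨K, rfl⟩ : ∃ k, K = k + 1 := ⟨K - 1, by omega⟩; rfl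
  | succ T ih =>
    obtain ⟨K, rfl⟩ : ∃ k, K = k + 1 := ⟨K - 1, by omega⟩
    rw [tailProb_succ_succ, ih (by omega), ih (by omega), mul_zero, mul_zero, add_zero]

lemma tailProb_nonneg (h0 : 0 ≤ ε) (h1 : ε ≤ 1) (K T : ℕ) : 0 ≤ tailProb ε K T := by
  induction T generalizing K with
  | zero => cases K <;> simp
  | succ T ih =>
    cases K with
    | zero => simp
    | succ K =>
      rw [tailProb_succ_succ]
      exact add_nonneg (mul_nonneg h0 (ih _)) (mul_nonneg (sub_nonneg.2 h1) (ih _))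

lemma tailProb_succ_left_le (h0 : 0 ≤ ε) (h1 : ε ≤ 1) (K T : ℕ) :
    tailProb ε (K + 1) T ≤ tailProb ε K T := by
  induction T generalizing K with
  | zero => simpa using tailProb_nonneg h0 h1 K 0
  | succ T ih =>
    cases K with
    | zero =>
      rw [tailProb_succ_succ, tailProb_zero_left, tailProb_zero_left]
      nlinarith [ih 0, tailProb_zero_left ε T]
    | succ K =>
      rw [tailProb_succ_succ, tailProb_succ_succ]
      gcongr ?_ + ?_
      · exact mul_le_mul_of_nonneg_left (ih _) h0
      · exact mul_le_mul_of_nonneg_left (ih _) (sub_nonneg.2 h1)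

lemma tailProb_antitone (h0 : 0 ≤ ε) (h1 : ε ≤ 1) (T : ℕ) : Antitone (tailProb ε · T) :=
  antitone_nat_of_succ_le fun K => tailProb_succ_left_le h0 h1 K T

lemma tailProb_monotone (h0 : 0 ≤ ε) (h1 : ε ≤ 1) (K : ℕ) : Monotone (tailProb ε K) := by
  refine monotone_nat_of_le_succ fun T => ?_
  cases K with
  | zero => simp
  | succ K =>
    rw [tailProb_succ_succ]
    have := tailProb_succ_left_le h0 h1 K T
    nlinarith

lemma tailProb_add_le_mul (h0 : 0 ≤ ε) (h1 : ε ≤ 1) (a b T : ℕ) :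
    tailProb ε (a + b) T ≤ tailProb ε a T * tailProb ε b T := by
  induction T generalizing a with
  | zero =>
    rcases Nat.eq_zero_or_pos a with rfl | ha
    · simp
    · rw [tailProb_of_lt (by omega)]
      exact mul_nonneg (tailProb_nonneg h0 h1 a 0) (tailProb_nonneg h0 h1 b 0)
  | succ T ih =>
    cases a with
    | zero => simp
    | succ a =>
      calc tailProb ε (a + 1 + b) (T + 1)
          = ε * tailProb ε (a + 1 + b) T + (1 - ε) * tailProb ε (a + b) T := by
            rw [show a + 1 + b = a + b + 1 by ring, tailProb_succ_succ]
        _ ≤ ε * (tailProb ε (a + 1) T * tailProb ε b T) +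
              (1 - ε) * (tailProb ε a T * tailProb ε b T) := by
            gcongr ?_ + ?_
            · exact mul_le_mul_of_nonneg_left (ih _) h0
            · exact mul_le_mul_of_nonneg_left (ih _) (sub_nonneg.2 h1)
        _ = tailProb ε (a + 1) (T + 1) * tailProb ε b T := by rw [tailProb_succ_succ]; ring
        _ ≤ tailProb ε (a + 1) (T + 1) * tailProb ε b (T + 1) :=
            mul_le_mul_of_nonneg_left (tailProb_monotone h0 h1 b (Nat.le_succ T))
              (tailProb_nonneg h0 h1 _ _)

lemma tailProb_add_two_mul_le (h0 : 0 ≤ ε) (h1 : ε ≤ 1) (K T : ℕ) :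
    tailProb ε (K + 2) T * tailProb ε 1 T ≤ tailProb ε (K + 1) T * tailProb ε 2 T := by
  induction T with
  | zero => simp
  | succ T ih =>
    have hK2 := tailProb_add_le_mul h0 h1 K 2 T
    have hK1 := tailProb_add_le_mul h0 h1 K 1 T
    have hf : 0 ≤ 1 - ε := sub_nonneg.2 h1
    have eK2 : tailProb ε (K + 2) (T + 1) =
        ε * tailProb ε (K + 2) T + (1 - ε) * tailProb ε (K + 1) T := rfl
    have eK1 : tailProb ε (K + 1) (T + 1) =
        ε * tailProb ε (K + 1) T + (1 - ε) * tailProb ε K T := rfl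
    have e2 : tailProb ε 2 (T + 1) = ε * tailProb ε 2 T + (1 - ε) * tailProb ε 1 T := rfl
    rw [eK2, eK1, e2, tailProb_one_succ]
    -- the gap grows by `ε² (ih) + ε(1-ε) (q_{K+2} ≤ q_K q_2) + (1-ε)² (q_{K+1} ≤ q_K q_1)`
    nlinarith [mul_le_mul_of_nonneg_left ih (mul_nonneg h0 h0),
      mul_le_mul_of_nonneg_left hK2 (mul_nonneg h0 hf),
      mul_le_mul_of_nonneg_left hK1 (mul_nonneg hf hf)]

lemma tailProb_add_two_mul_pow_le (h0 : 0 ≤ ε) (h1 : ε ≤ 1) (K T : ℕ) :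
    tailProb ε (K + 2) T * tailProb ε 1 T ^ K ≤ tailProb ε 2 T ^ (K + 1) := by
  induction K with
  | zero => simp
  | succ K ih =>
    have h2 := tailProb_nonneg h0 h1 2 T
    calc tailProb ε (K + 3) T * tailProb ε 1 T ^ (K + 1)
        = tailProb ε (K + 3) T * tailProb ε 1 T * tailProb ε 1 T ^ K := by ring
      _ ≤ tailProb ε (K + 2) T * tailProb ε 2 T * tailProb ε 1 T ^ K :=
          mul_le_mul_of_nonneg_right (tailProb_add_two_mul_le h0 h1 (K + 1) T)
            (pow_nonneg (tailProb_nonneg h0 h1 1 T) K)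
      _ = tailProb ε 2 T * (tailProb ε (K + 2) T * tailProb ε 1 T ^ K) := by ring
      _ ≤ tailProb ε 2 T * tailProb ε 2 T ^ (K + 1) := mul_le_mul_of_nonneg_left ih h2
      _ = tailProb ε 2 T ^ (K + 2) := by ring

lemma tailProb_two_mul_le_mul (h0 : 0 ≤ ε) (h1 : ε ≤ 1) {T T' : ℕ} (h : T ≤ T') :
    tailProb ε 2 T * tailProb ε 1 T' ≤ tailProb ε 2 T' * tailProb ε 1 T := by
  induction T', h using Nat.le_induction with
  | base => rw [mul_comm]
  | succ T' hT ih =>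
    have e2 : tailProb ε 2 (T' + 1) = ε * tailProb ε 2 T' + (1 - ε) * tailProb ε 1 T' := rfl
    have hsq : tailProb ε 2 T ≤ tailProb ε 1 T' * tailProb ε 1 T :=
      calc tailProb ε 2 T ≤ tailProb ε 1 T * tailProb ε 1 T := tailProb_add_le_mul h0 h1 1 1 T
        _ ≤ tailProb ε 1 T' * tailProb ε 1 T := by
          gcongr
          · exact tailProb_nonneg h0 h1 1 T
          · exact tailProb_monotone h0 h1 1 hT
    rw [e2, tailProb_one_succ]
    -- the gap `q₂(T') q₁(T) - q₂(T) q₁(T')` is scaled by `ε` and increased by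
    -- `(1-ε) (q₁(T') q₁(T) - q₂(T)) ≥ 0`
    nlinarith [mul_le_mul_of_nonneg_left ih h0, mul_le_mul_of_nonneg_left hsq (sub_nonneg.2 h1)]

end tailProb

section reward

variable {ε : ℝ} {N : ℕ}

lemma two_mul_tailProb_two_pow_le (h0 : 0 ≤ ε) (h1 : ε ≤ 1) {T T' : ℕ} (hT : T ≤ T')
    (h : 2 * tailProb ε 2 T' ^ N < tailProb ε 1 T' ^ N) :
    2 * tailProb ε 2 T ^ N ≤ tailProb ε 1 T ^ N := by
  have hcross : (tailProb ε 2 T * tailProb ε 1 T') ^ N ≤ (tailProb ε 2 T' * tailProb ε 1 T) ^ N :=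
    pow_le_pow_left₀ (mul_nonneg (tailProb_nonneg h0 h1 2 T) (tailProb_nonneg h0 h1 1 T'))
      (tailProb_two_mul_le_mul h0 h1 hT) N
  rw [mul_pow, mul_pow] at hcross
  have hpos : 0 < tailProb ε 1 T' ^ N :=
    lt_of_le_of_lt (mul_nonneg zero_le_two (pow_nonneg (tailProb_nonneg h0 h1 2 T') N)) h
  refine le_of_mul_le_mul_right ?_ hpos
  nlinarith [pow_nonneg (tailProb_nonneg h0 h1 1 T) N]

lemma add_two_mul_tailProb_pow_le (h0 : 0 ≤ ε) (h1 : ε ≤ 1) (n : ℕ) {T : ℕ}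
    (h : 2 * tailProb ε 2 T ^ N ≤ tailProb ε 1 T ^ N) :
    (n + 2) * tailProb ε (n + 2) T ^ N ≤ tailProb ε 1 T ^ N := by
  refine add_two_mul_le_of_mul_pow_le n (pow_nonneg (tailProb_nonneg h0 h1 2 T) N)
    (pow_nonneg (tailProb_nonneg h0 h1 _ T) N)
    (pow_le_pow_left₀ (tailProb_nonneg h0 h1 _ T)
      (tailProb_antitone h0 h1 T (by omega : 1 ≤ n + 2)) N) h ?_
  have := pow_le_pow_left₀ (mul_nonneg (tailProb_nonneg h0 h1 _ T)
    (pow_nonneg (tailProb_nonneg h0 h1 1 T) n)) (tailProb_add_two_mul_pow_le h0 h1 n T) N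
  rwa [mul_pow, ← pow_mul, ← pow_mul, mul_comm n, mul_comm (n + 1), pow_mul, pow_mul] at this

end reward

section bellman

variable {ε : ℝ} {N : ℕ}

lemma Pall_of_lt (hN : 1 ≤ N) {K T : ℕ} (h : T < K) : Pall ε N K T = 0 := by
  rw [Pall, Phat, Icc_eq_empty_of_lt h, sum_empty, zero_pow (by omega)]

lemma Pall_monotone (h0 : 0 ≤ ε) (h1 : ε ≤ 1) (K : ℕ) : Monotone (Pall ε N (K + 1)) :=
  fun _ _ hT => by
    simp only [Pall_succ]
    exact pow_le_pow_left₀ (tailProb_nonneg h0 h1 _ _) (tailProb_monotone h0 h1 _ hT) N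

lemma Pall_le_Pall_one (h0 : 0 ≤ ε) (h1 : ε ≤ 1) {K : ℕ} (hK : 1 ≤ K) (T : ℕ) :
    Pall ε N K T ≤ Pall ε N 1 T := by
  obtain ⟨K, rfl⟩ : ∃ k, K = k + 1 := ⟨K - 1, by omega⟩
  rw [Pall_succ, Pall_succ]
  exact pow_le_pow_left₀ (tailProb_nonneg h0 h1 _ _) (tailProb_antitone h0 h1 T hK) N

lemma Rew_le_Rew_one (h0 : 0 ≤ ε) (h1 : ε ≤ 1) {K T : ℕ} (hK : 1 ≤ K)
    (h : 2 * tailProb ε 2 T ^ N ≤ tailProb ε 1 T ^ N) : Rew ε N T K ≤ Rew ε N T 1 := by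
  obtain rfl | ⟨n, rfl⟩ : K = 1 ∨ ∃ n, K = n + 2 :=
    (eq_or_lt_of_le hK).imp Eq.symm fun hK => ⟨K - 2, by omega⟩
  · exact le_rfl
  · simp only [Rew, Pall_succ, Nat.cast_add, Nat.cast_ofNat, Nat.cast_one, one_mul]
    exact add_two_mul_tailProb_pow_le h0 h1 n h

lemma bellmanRHS_eq (hN : 1 ≤ N) {V : ℕ → ℝ} (hV0 : V 0 = 0) {t K : ℕ} (hK : 1 ≤ K)
    (hKt : K ≤ t) :
    bellmanRHS ε N V t K =
      Rew ε N t K + ∑ i ∈ range t, (V (i + 1) - V i) * Pall ε N K (t - 1 - i) := by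
  have hext : ∑ j ∈ range (t - K + 1), (Pall ε N K (t - j) - Pall ε N K (t - j - 1)) * V j =
      ∑ j ∈ range t, (Pall ε N K (t - j) - Pall ε N K (t - j - 1)) * V j := by
    refine sum_subset (range_subset_range.2 (by omega)) fun j hj hj' => ?_
    rw [mem_range] at hj hj'
    rw [Pall_of_lt hN (by omega), Pall_of_lt hN (by omega), sub_zero, zero_mul]
  rw [bellmanRHS, hext, sum_range_sub_mul_eq _ V hV0, Pall_of_lt hN hK]
  simp only [sub_zero]

lemma bellmanRHS_le_bellmanRHS_one (h0 : 0 ≤ ε) (h1 : ε ≤ 1) (hN : 1 ≤ N) {V : ℕ → ℝ}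
    (hV0 : V 0 = 0) {t K : ℕ} (hV : ∀ i, i + 1 < t → V i ≤ V (i + 1)) (hK : 1 ≤ K)
    (hKt : K ≤ t) (hrew : Rew ε N t K ≤ Rew ε N t 1) :
    bellmanRHS ε N V t K ≤ bellmanRHS ε N V t 1 := by
  rw [bellmanRHS_eq hN hV0 hK hKt, bellmanRHS_eq hN hV0 le_rfl (by omega)]
  refine add_le_add hrew (sum_le_sum fun i hi => ?_)
  rw [mem_range] at hi
  obtain hi | rfl : i + 1 < t ∨ i + 1 = t := by omega
  · exact mul_le_mul_of_nonneg_left (Pall_le_Pall_one h0 h1 hK _) (sub_nonneg.2 (hV i hi))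
  · rw [Nat.add_sub_cancel, Nat.sub_self, Pall_of_lt hN hK, Pall_of_lt hN one_pos]

lemma bellmanRHS_one_le_succ (h0 : 0 ≤ ε) (h1 : ε ≤ 1) (hN : 1 ≤ N) {V : ℕ → ℝ}
    (hV0 : V 0 = 0) {t : ℕ} (ht : 1 ≤ t) (hV : ∀ i < t, V i ≤ V (i + 1)) :
    bellmanRHS ε N V t 1 ≤ bellmanRHS ε N V (t + 1) 1 := by
  rw [bellmanRHS_eq hN hV0 le_rfl ht, bellmanRHS_eq hN hV0 le_rfl (by omega), sum_range_succ,
    Nat.add_sub_cancel, Nat.sub_self, Pall_of_lt hN one_pos, mul_zero, add_zero]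
  refine add_le_add ?_ (sum_le_sum fun i hi => ?_)
  · simp only [Rew, Nat.cast_one, one_mul]
    exact Pall_monotone h0 h1 0 (Nat.le_succ t)
  · rw [mem_range] at hi
    exact mul_le_mul_of_nonneg_left (Pall_monotone h0 h1 0 (by omega)) (sub_nonneg.2 (hV i hi))

end bellman

namespace BellmanSystem

variable {ε : ℝ} {N : ℕ} {V : ℕ → ℝ} {Ks : ℕ → ℕ}

lemma optimal_eq_one (hB : BellmanSystem ε N V Ks) {t : ℕ} (ht : 1 ≤ t)
    (hdom : ∀ K ∈ Icc 1 t, bellmanRHS ε N V t K ≤ bellmanRHS ε N V t 1) :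
    V t = bellmanRHS ε N V t 1 ∧ Ks t = 1 := by
  obtain ⟨-, hle, hopt⟩ := hB
  obtain ⟨hKs, hVKs, hleast⟩ := hopt t ht
  have h1 : (1 : ℕ) ∈ Icc 1 t := mem_Icc.2 ⟨le_rfl, ht⟩
  have hV : V t = bellmanRHS ε N V t 1 :=
    le_antisymm (hVKs ▸ hdom _ hKs) (hle t ht 1 h1)
  exact ⟨hV, le_antisymm (hleast 1 h1 hV) (mem_Icc.1 hKs).1⟩

lemma value_le_succ (hB : BellmanSystem ε N V Ks) (h0 : 0 ≤ ε) (h1 : ε ≤ 1) (hN : 1 ≤ N)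
    {t : ℕ} (hdom : ∀ j ≤ t, (∀ i, i + 1 < j → V i ≤ V (i + 1)) →
      ∀ K ∈ Icc 1 j, bellmanRHS ε N V j K ≤ bellmanRHS ε N V j 1) :
    ∀ i < t, V i ≤ V (i + 1) := by
  intro i
  induction i using Nat.strong_induction_on with
  | _ i ih =>
    intro hi
    have hV1 : bellmanRHS ε N V (i + 1) 1 ≤ V (i + 1) :=
      hB.2.1 (i + 1) (by omega) 1 (mem_Icc.2 ⟨le_rfl, by omega⟩)
    rcases Nat.eq_zero_or_pos i with rfl | hi0
    · refine hB.1 ▸ le_trans ?_ hV1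
      rw [bellmanRHS_eq hN hB.1 le_rfl le_rfl, sum_range_one,
        Pall_of_lt hN (show 1 - 1 - 0 < 1 by norm_num), mul_zero, add_zero, Rew, Nat.cast_one,
        one_mul, Pall_succ]
      exact pow_nonneg (tailProb_nonneg h0 h1 1 1) N
    · have hVi := (hB.optimal_eq_one hi0
        (hdom i hi.le fun k hk => ih k (by omega) (by omega))).1
      calc V i = bellmanRHS ε N V i 1 := hVi
        _ ≤ bellmanRHS ε N V (i + 1) 1 :=
          bellmanRHS_one_le_succ h0 h1 hN hB.1 hi0 fun k hk => ih k hk (by omega)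
        _ ≤ V (i + 1) := hV1

end BellmanSystem

theorem plain_retransmission_optimal_general (ε : ℝ) (hε0 : 0 < ε) (hε1 : ε < 1)
    (N : ℕ) (hN : 1 ≤ N) (V : ℕ → ℝ) (Ks : ℕ → ℕ) (hB : BellmanSystem ε N V Ks)
    (t : ℕ) (hR : Rew ε N t 2 < Rew ε N t 1) :
    ∀ j, 1 ≤ j → j ≤ t → Ks j = 1 := by
  have h0 := hε0.le
  have h1 := hε1.le
  have hRt : 2 * tailProb ε 2 t ^ N < tailProb ε 1 t ^ N := by
    simpa [Rew, Pall_succ] using hR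
  have hdom : ∀ j ≤ t, (∀ i, i + 1 < j → V i ≤ V (i + 1)) →
      ∀ K ∈ Icc 1 j, bellmanRHS ε N V j K ≤ bellmanRHS ε N V j 1 := fun j hj hV K hK =>
    bellmanRHS_le_bellmanRHS_one h0 h1 hN hB.1 hV (mem_Icc.1 hK).1 (mem_Icc.1 hK).2
      (Rew_le_Rew_one h0 h1 (mem_Icc.1 hK).1 (two_mul_tailProb_two_pow_le h0 h1 hj hRt))
  have hmono := hB.value_le_succ h0 h1 hN hdom
  intro j hj1 hjt
  exact (hB.optimal_eq_one hj1 (hdom j hjt fun i hi => hmono i (by omega))).2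

/-- Let `0 < ε < 1`, `N ≥ 1` and `t ≥ 2`. If `R_t(1) > R_t(2)`, then
the optimal policy is plain retransmission for all remaining slots: `K*_j = 1` for
every `j ∈ {1,…,t}`. -/
theorem plain_retransmission_optimal (ε : ℝ) (hε0 : 0 < ε) (hε1 : ε < 1)
    (N : ℕ) (hN : 1 ≤ N) (V : ℕ → ℝ) (Ks : ℕ → ℕ) (hB : BellmanSystem ε N V Ks)
    (t : ℕ) (ht : 2 ≤ t) (hR : Rew ε N t 2 < Rew ε N t 1) :
    ∀ j, 1 ≤ j → j ≤ t → Ks j = 1 :=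
  plain_retransmission_optimal_general ε hε0 hε1 N hN V Ks hB t hR
end

section
/- Fix an integer t ≥ 2. The threshold erasure probability is strictly decreasing in the number of receivers: for all integers N1, N2 with 1 ≤ N1 < N2, one has ε*(t, N2) < ε*(t, N1). -/
/-- `e` is the threshold erasure probability `ε*(t,N)`: the unique zero of
`f(·, t, N)` in `(0,1)`, with `f < 0` below it and `f > 0` above it. -/
def IsThreshold (t N : ℕ) (e : ℝ) : Prop :=
  e ∈ Set.Ioo (0 : ℝ) 1 ∧ fThresh e t N = 0 ∧
  (∀ ε' ∈ Set.Ioo (0 : ℝ) e, fThresh ε' t N < 0) ∧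
  (∀ ε' ∈ Set.Ioo e (1 : ℝ), 0 < fThresh ε' t N)

lemma rpow_one_div_lt_rpow_one_div {b x y : ℝ} (hb : 1 < b) (hx : 0 < x) (hxy : x < y) :
    b ^ (1 / y) < b ^ (1 / x) :=
  Real.rpow_lt_rpow_of_exponent_lt hb (one_div_lt_one_div_of_lt hx hxy)

lemma fThresh_pos_of_fThresh_eq_zero {ε : ℝ} {t M N : ℕ} (hε₀ : 0 ≤ ε) (hε₁ : ε < 1)
    (ht : t ≠ 0) (hM : 0 < M) (hMN : M < N) (hzero : fThresh ε t M = 0) :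
    0 < fThresh ε t N := by
  unfold fThresh at *
  set B := 1 - ε ^ t + (t : ℝ) * ε ^ t - (t : ℝ) * ε ^ (t - 1)
  have hA : 0 < 1 - ε ^ t := sub_pos.mpr (pow_lt_one₀ hε₀ hε₁ ht)
  have hcM : 0 < (2 : ℝ) ^ (1 / (M : ℝ)) := by positivity
  have hB : 0 < B := by
    by_contra! hB
    nlinarith [mul_nonpos_of_nonneg_of_nonpos hcM.le hB]
  have hc : (2 : ℝ) ^ (1 / (N : ℝ)) < 2 ^ (1 / (M : ℝ)) :=
    rpow_one_div_lt_rpow_one_div one_lt_two (by exact_mod_cast hM) (by exact_mod_cast hMN)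
  nlinarith [mul_lt_mul_of_pos_right hc hB]

lemma IsThreshold.lt_of_fThresh_pos {t N : ℕ} {e ε : ℝ} (he : IsThreshold t N e) (hε : 0 < ε)
    (hf : 0 < fThresh ε t N) : e < ε := by
  obtain ⟨-, he_zero, hneg, -⟩ := he
  by_contra! hεe
  rcases hεe.lt_or_eq with hlt | rfl
  · exact (hneg ε ⟨hε, hlt⟩).not_gt hf
  · exact hf.ne' he_zero

/-- Fix `t ≥ 2`. The threshold erasure probability is strictly
decreasing in the number of receivers: for `1 ≤ N1 < N2`, `ε*(t, N2) < ε*(t, N1)`. -/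
theorem threshold_anti_in_N (t N1 N2 : ℕ) (ht : 2 ≤ t) (hN1 : 1 ≤ N1) (hN : N1 < N2)
    (e1 e2 : ℝ) (he1 : IsThreshold t N1 e1) (he2 : IsThreshold t N2 e2) :
    e2 < e1 := by
  obtain ⟨⟨he1_pos, he1_lt⟩, he1_zero, -⟩ := he1
  exact he2.lt_of_fThresh_pos he1_pos <|
    fThresh_pos_of_fThresh_eq_zero he1_pos.le he1_lt (by omega) hN1 hN he1_zero
end

section
/- Fix an integer N ≥ 1. The threshold erasure probability is strictly increasing in the number of remaining slots: for every integer t ≥ 2, one has ε*(t, N) < ε*(t+1, N). -/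
/-!
With `c = 2^{1/N}`, one has `f(ε, t+1) - f(ε, t) = (1 - ε) ε^{t-1} (ε - c t (1 - ε))`.
At a zero `ε` of `f(·, t)` the identity `c (1 - ε^t - t ε^{t-1} (1 - ε)) = 1 - ε^t` together
with Bernoulli's inequality `1 - ε^t ≤ t (1 - ε)` gives `ε < c t (1 - ε)`, so
`f(ε*(t), t+1) < 0`, which places `ε*(t)` strictly below `ε*(t+1)`.
-/

open Set

lemma fThresh_succ_sub (ε : ℝ) {t : ℕ} (ht : 1 ≤ t) (N : ℕ) :
    fThresh ε (t + 1) N - fThresh ε t N =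
      (1 - ε) * ε ^ (t - 1) * (ε - (2 : ℝ) ^ (1 / (N : ℝ)) * t * (1 - ε)) := by
  obtain ⟨k, rfl⟩ : ∃ k, t = k + 1 := ⟨t - 1, by omega⟩
  simp only [fThresh, Nat.add_sub_cancel]
  push_cast
  ring

lemma lt_mul_of_fThresh_eq_zero {ε : ℝ} (hε : ε ∈ Ioo (0 : ℝ) 1) {t : ℕ} (ht : 1 ≤ t)
    {N : ℕ} (hf : fThresh ε t N = 0) :
    ε < (2 : ℝ) ^ (1 / (N : ℝ)) * t * (1 - ε) := by
  obtain ⟨hε0, hε1⟩ := hε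
  set c : ℝ := (2 : ℝ) ^ (1 / (N : ℝ))
  set D : ℝ := 1 - ε ^ t + t * ε ^ t - t * ε ^ (t - 1)
  have hc : 0 < c := by positivity
  have hcD : c * D = 1 - ε ^ t := by simp only [fThresh] at hf; linarith
  have hpow : 0 < 1 - ε ^ t := sub_pos.mpr (pow_lt_one₀ hε0.le hε1 (by omega))
  have hD : 0 < D := pos_of_mul_pos_right (hcD ▸ hpow) hc.le
  have hbernoulli : 1 - ε ^ t ≤ t * (1 - ε) := by
    have := one_add_mul_le_pow (a := ε - 1) (by linarith) t
    rw [add_sub_cancel] at this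
    linarith
  have hεD : ε * D = ε * (1 - ε ^ t) - t * ε ^ t * (1 - ε) := by
    obtain ⟨k, rfl⟩ : ∃ k, t = k + 1 := ⟨t - 1, by omega⟩
    simp only [D, Nat.add_sub_cancel, pow_succ]
    ring
  refine lt_of_mul_lt_mul_right ?_ hD.le
  calc ε * D = ε * (1 - ε ^ t) - t * ε ^ t * (1 - ε) := hεD
    _ < (1 - ε ^ t) - t * ε ^ t * (1 - ε) := by linarith [mul_lt_of_lt_one_left hpow hε1]
    _ ≤ t * (1 - ε) - t * ε ^ t * (1 - ε) := by linarith
    _ = c * t * (1 - ε) * D := by linear_combination (-(t * (1 - ε))) * hcD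

lemma fThresh_succ_neg_of_eq_zero {ε : ℝ} (hε : ε ∈ Ioo (0 : ℝ) 1) {t : ℕ} (ht : 1 ≤ t)
    {N : ℕ} (hf : fThresh ε t N = 0) : fThresh ε (t + 1) N < 0 := by
  have hfactor : 0 < (1 - ε) * ε ^ (t - 1) := mul_pos (sub_pos.mpr hε.2) (pow_pos hε.1 _)
  have hgap := lt_mul_of_fThresh_eq_zero hε ht hf
  rw [← sub_add_cancel (fThresh ε (t + 1) N) (fThresh ε t N), fThresh_succ_sub ε ht N, hf,
    add_zero]
  exact mul_neg_of_pos_of_neg hfactor (sub_neg.mpr hgap)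

lemma IsThreshold.lt_of_fThresh_neg {t N : ℕ} {e ε : ℝ} (he : IsThreshold t N e)
    (hε : ε ∈ Ioo (0 : ℝ) 1) (hf : fThresh ε t N < 0) : ε < e := by
  obtain ⟨-, hzero, -, hpos⟩ := he
  by_contra! hle
  rcases hle.lt_or_eq with hlt | rfl
  · exact (hpos ε ⟨hlt, hε.2⟩).not_gt hf
  · exact hf.ne hzero

theorem threshold_mono_in_t_general (N : ℕ) (t : ℕ) (ht : 2 ≤ t)
    (e1 e2 : ℝ) (he1 : IsThreshold t N e1) (he2 : IsThreshold (t + 1) N e2) :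
    e1 < e2 :=
  he2.lt_of_fThresh_neg he1.1 (fThresh_succ_neg_of_eq_zero he1.1 (by omega) he1.2.1)

/-- Fix `N ≥ 1`. The threshold erasure probability is strictly
increasing in the number of remaining slots: for every `t ≥ 2`, `ε*(t,N) < ε*(t+1,N)`. -/
theorem threshold_mono_in_t (N : ℕ) (hN : 1 ≤ N) (t : ℕ) (ht : 2 ≤ t)
    (e1 e2 : ℝ) (he1 : IsThreshold t N e1) (he2 : IsThreshold (t + 1) N e2) :
    e1 < e2 :=
  threshold_mono_in_t_general N t ht e1 e2 he1 he2
end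

section
/- For every erasure probability ε with 0 < ε < 1 and every integer N ≥ 1, the optimal block sizes in the last two slots before the deadline equal one: K*_1 = 1 and K*_2 = 1. -/
/-! With one slot left only `K = 1` is admissible.  With two slots left, sending both packets
as one block earns `2 (1-ε)^{2N}`, while sending one packet now and one in the last slot earns
`(1-ε²)^N + (1-ε)^N · V 1 = (1-ε²)^N + (1-ε)^{2N}`; since `(1-ε)² ≤ 1-ε²`, the block size `1`
attains the maximum and so is the least maximizer. -/

lemma Phat_one (ε : ℝ) (T : ℕ) : Phat ε 1 T = 1 - ε ^ T := by
  induction T with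
  | zero => simp [Phat]
  | succ T ih =>
    rw [Phat, Finset.sum_Icc_succ_top (by omega), ← Phat, ih, Nat.add_sub_cancel,
      Nat.choose_zero_right, Nat.cast_one, one_mul, pow_one]
    ring

lemma Phat_self (ε : ℝ) (K : ℕ) : Phat ε K K = (1 - ε) ^ K := by
  simp [Phat]

section Bellman

variable {ε : ℝ} {N : ℕ} {V : ℕ → ℝ}

lemma bellmanRHS_self (hV0 : V 0 = 0) (t : ℕ) :
    bellmanRHS ε N V t t = t * Pall ε N t t := by
  simp [bellmanRHS, Rew, hV0]

lemma bellmanRHS_two_one (hN : N ≠ 0) (hV0 : V 0 = 0) :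
    bellmanRHS ε N V 2 1 = (1 - ε ^ 2) ^ N + (1 - ε) ^ N * V 1 := by
  simp [bellmanRHS, Rew, Pall, Finset.sum_range_succ, Phat_one, hV0, zero_pow hN]

variable {Ks : ℕ → ℕ}

lemma BellmanSystem.optimal_eq_one_of_forall_le (hB : BellmanSystem ε N V Ks) {t : ℕ}
    (ht : 1 ≤ t) (h : ∀ K ∈ Finset.Icc 1 t, bellmanRHS ε N V t K ≤ bellmanRHS ε N V t 1) :
    Ks t = 1 := by
  obtain ⟨hmem, hV, hleast⟩ := hB.2.2 t ht
  have hone : (1 : ℕ) ∈ Finset.Icc 1 t := Finset.mem_Icc.2 ⟨le_rfl, ht⟩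
  have hV1 : V t = bellmanRHS ε N V t 1 :=
    le_antisymm (hV ▸ h _ hmem) (hB.2.1 t ht 1 hone)
  exact le_antisymm (hleast 1 hone hV1) (Finset.mem_Icc.1 hmem).1

lemma BellmanSystem.optimal_one (hB : BellmanSystem ε N V Ks) : Ks 1 = 1 := by
  simpa using (hB.2.2 1 le_rfl).1

lemma BellmanSystem.value_one (hB : BellmanSystem ε N V Ks) :
    V 1 = (1 - ε) ^ N := by
  rw [(hB.2.2 1 le_rfl).2.1, hB.optimal_one, bellmanRHS_self hB.1, Pall, Phat_self]
  simp

lemma BellmanSystem.bellmanRHS_two_two_le (hB : BellmanSystem ε N V Ks) (hN : N ≠ 0)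
    (hε0 : 0 ≤ ε) (hε1 : ε ≤ 1) : bellmanRHS ε N V 2 2 ≤ bellmanRHS ε N V 2 1 := by
  have hsq : ((1 - ε) ^ 2) ^ N ≤ (1 - ε ^ 2) ^ N :=
    pow_le_pow_left₀ (sq_nonneg _) (by nlinarith) N
  calc bellmanRHS ε N V 2 2 = ((1 - ε) ^ 2) ^ N + (1 - ε) ^ N * (1 - ε) ^ N := by
        rw [bellmanRHS_self hB.1, Pall, Phat_self, ← mul_pow, ← sq]
        push_cast
        ring
    _ ≤ (1 - ε ^ 2) ^ N + (1 - ε) ^ N * V 1 := by rw [hB.value_one]; gcongr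
    _ = bellmanRHS ε N V 2 1 := (bellmanRHS_two_one hN hB.1).symm

end Bellman

/-- For `0 < ε < 1` and `N ≥ 1`, the optimal block sizes in the last
two slots before the deadline equal one: `K*_1 = 1` and `K*_2 = 1`. -/
theorem optimal_last_two_slots (ε : ℝ) (hε0 : 0 < ε) (hε1 : ε < 1) (N : ℕ) (hN : 1 ≤ N)
    (V : ℕ → ℝ) (Ks : ℕ → ℕ) (hB : BellmanSystem ε N V Ks) :
    Ks 1 = 1 ∧ Ks 2 = 1 := by
  refine ⟨hB.optimal_one, hB.optimal_eq_one_of_forall_le one_le_two fun K hK => ?_⟩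
  obtain rfl | rfl : K = 1 ∨ K = 2 := by simp only [Finset.mem_Icc] at hK; omega
  · exact le_rfl
  · exact hB.bellmanRHS_two_two_le (by omega) hε0.le hε1.le
end
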